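/- arXiv:2401.16480 — 2 statements merged into one kernel-verified Lean document; each statement's English description precedes it below -/
import Mathlib

section
/- Let H = H_J + H_μ + H_{h^z}. Define the diagonal operators P_0 e_{n,s} = [s_1=1] e_{n,s}; P_k e_{n,s} = ([n_k=1] + [s_{k+1}=1] − [s_k=1]) e_{n,s} for 1 ≤ k ≤ M−1; and P_M e_{n,s} = ([n_M=1] − [s_M=1]) e_{n,s}. Then every P_k (0 ≤ k ≤ M) commutes with H; i.e. the no-hopping breakdown model possesses M+1 local conserved charges P_0,…,P_M. -/
open scoped BigOperators

namespace QuantumBreakdown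

/-- Basis index: pairs of an occupation configuration and a spin configuration. -/
abbrev Cfg (M : ℕ) := (Fin M → Bool) × (Fin M → Bool)

/-- The Hilbert space `V_M`. -/
abbrev V (M : ℕ) := Cfg M → ℂ

/-- The basis vector `e_{n,s}`. -/
noncomputable def e (M : ℕ) (p : Cfg M) : V M := Pi.single p 1

/-- The linear operator determined by prescribed images of the basis vectors. -/
noncomputable def mkOp (M : ℕ) (f : Cfg M → V M) : V M →ₗ[ℂ] V M :=
  (Pi.basisFun ℂ (Cfg M)).constr ℂ f

/-- The left site of edge `m`. -/
def sL (M : ℕ) (m : Fin (M - 1)) : Fin M := ⟨m.1, by have := m.2; omega⟩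

/-- The right site of edge `m`. -/
def sR (M : ℕ) (m : Fin (M - 1)) : Fin M := ⟨m.1 + 1, by have := m.2; omega⟩

/-- Move a fermion from site `a` to site `b`. -/
def hop (M : ℕ) (n : Fin M → Bool) (a b : Fin M) : Fin M → Bool :=
  Function.update (Function.update n a false) b true

/-- The hopping term `H_γ`. -/
noncomputable def Hgam (M : ℕ) (γ : Fin (M - 1) → ℝ) : V M →ₗ[ℂ] V M :=
  mkOp M fun p =>
    -∑ m : Fin (M - 1), (γ m : ℂ) •
      ((if p.1 (sL M m) = true ∧ p.1 (sR M m) = false then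
          e M (hop M p.1 (sL M m) (sR M m), p.2) else 0)
        +
       (if p.1 (sR M m) = true ∧ p.1 (sL M m) = false then
          e M (hop M p.1 (sR M m) (sL M m), p.2) else 0))

/-- The breakdown interaction `H_J`. -/
noncomputable def HJop (M : ℕ) (J : Fin (M - 1) → ℝ) : V M →ₗ[ℂ] V M :=
  mkOp M fun p =>
    ∑ m : Fin (M - 1), (J m : ℂ) •
      ((if p.1 (sL M m) = true ∧ p.1 (sR M m) = false ∧ p.2 (sR M m) = false then
          e M (hop M p.1 (sL M m) (sR M m), Function.update p.2 (sR M m) true) else 0)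
        +
       (if p.1 (sR M m) = true ∧ p.1 (sL M m) = false ∧ p.2 (sR M m) = true then
          e M (hop M p.1 (sR M m) (sL M m), Function.update p.2 (sR M m) false) else 0))

/-- The on-site potential `H_μ`. -/
noncomputable def Hmu (M : ℕ) (μ : Fin M → ℝ) : V M →ₗ[ℂ] V M :=
  mkOp M fun p => (∑ m : Fin M, if p.1 m = true then (μ m : ℂ) else 0) • e M p

/-- Pauli `σ^x` at site `m`. -/
noncomputable def sigx (M : ℕ) (m : Fin M) : V M →ₗ[ℂ] V M :=
  mkOp M fun p => e M (p.1, Function.update p.2 m (!p.2 m))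

/-- Pauli `σ^y` at site `m`. -/
noncomputable def sigy (M : ℕ) (m : Fin M) : V M →ₗ[ℂ] V M :=
  mkOp M fun p =>
    (if p.2 m = true then Complex.I else -Complex.I) • e M (p.1, Function.update p.2 m (!p.2 m))

/-- Pauli `σ^z` at site `m`. -/
noncomputable def sigz (M : ℕ) (m : Fin M) : V M →ₗ[ℂ] V M :=
  mkOp M fun p => (if p.2 m = true then (1 : ℂ) else -1) • e M p

/-- The magnetic field term `H_h`. -/
noncomputable def Hh (M : ℕ) (hx hy hz : Fin M → ℝ) : V M →ₗ[ℂ] V M :=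
  ∑ m : Fin M, ((hx m : ℂ) • sigx M m + (hy m : ℂ) • sigy M m + (hz m : ℂ) • sigz M m)

/-- Number of occupied sites of an occupation configuration. -/
def nOcc (M : ℕ) (n : Fin M → Bool) : ℕ := (Finset.univ.filter fun m => n m = true).card

/-- The number operator `N`. -/
noncomputable def numOp (M : ℕ) : V M →ₗ[ℂ] V M :=
  mkOp M fun p => (nOcc M p.1 : ℂ) • e M p

/-- The charge-`Q` sector `W_Q`. -/
noncomputable def sector (M Q : ℕ) : Submodule ℂ (V M) :=
  Submodule.span ℂ { v | ∃ p : Cfg M, nOcc M p.1 = Q ∧ v = e M p }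

/-- The charge-`Q` sector with first spin up, `W_Q^↑`. -/
noncomputable def sectorUp (M : ℕ) (hM : 0 < M) (Q : ℕ) : Submodule ℂ (V M) :=
  Submodule.span ℂ { v | ∃ p : Cfg M, nOcc M p.1 = Q ∧ p.2 ⟨0, hM⟩ = true ∧ v = e M p }

end QuantumBreakdown

open QuantumBreakdown

/-- `[b] = 1` if `b` holds, else `0`. -/
noncomputable def bC (b : Bool) : ℂ := if b then 1 else 0

/-- The value of a configuration at the 1-indexed site `j` (as `0/1 ∈ ℂ`),
with value `0` out of range. -/
noncomputable def site1 (M : ℕ) (f : Fin M → Bool) (j : ℕ) : ℂ :=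
  if h : 1 ≤ j ∧ j ≤ M then bC (f ⟨j - 1, by omega⟩) else 0

/-- The local conserved charge `P_k` (`0 ≤ k ≤ M`):
`P_0 e_{n,s} = [s_1=1] e_{n,s}`,
`P_k e_{n,s} = ([n_k=1] + [s_{k+1}=1] − [s_k=1]) e_{n,s}` for `1 ≤ k ≤ M−1`, and
`P_M e_{n,s} = ([n_M=1] − [s_M=1]) e_{n,s}`. -/
noncomputable def Pop (M : ℕ) (k : ℕ) : V M →ₗ[ℂ] V M :=
  mkOp M fun p =>
    (if k = 0 then site1 M p.2 1
     else if k = M then site1 M p.1 M - site1 M p.2 M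
     else site1 M p.1 k + site1 M p.2 (k + 1) - site1 M p.2 k) • e M p

/-!
Every `P_k` is diagonal in the basis `e_{n,s}`, with eigenvalue the charge
`[n_k] + [s_{k+1}] - [s_k]` (values at sites outside `1, …, M` read as `0`, which covers `P_0` and `P_M`).
`H_μ` and `H_{h^z}` are diagonal as well, and `H_J` only connects configurations related by a
breakdown move on an edge `(a, a+1)`: a fermion hops from `a` to `a+1` while the spin at `a+1`
flips up, or the reverse. Such a move changes `n_a, n_{a+1}, s_{a+1}` by `∓1, ±1, ±1`, and every
charge sees only `n_a + s_{a+1}` and `n_{a+1} - s_{a+1}`, so `H` preserves each eigenspace of `P_k`.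
-/

namespace QuantumBreakdown

open Module.End

variable {M : ℕ}

theorem mkOp_e (f : Cfg M → V M) (p : Cfg M) : mkOp M f (e M p) = f p := by
  rw [mkOp, e, ← Pi.basisFun_apply ℂ, Module.Basis.constr_basis]

theorem linearMap_ext_e {A B : V M →ₗ[ℂ] V M} (h : ∀ p, A (e M p) = B (e M p)) : A = B :=
  (Pi.basisFun ℂ (Cfg M)).ext fun p => by simpa [e] using h p

variable (M) in
noncomputable def diag (f : Cfg M → ℂ) : V M →ₗ[ℂ] V M :=
  mkOp M fun p => f p • e M p

theorem diag_e (f : Cfg M → ℂ) (p : Cfg M) : diag M f (e M p) = f p • e M p :=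
  mkOp_e _ p

theorem e_mem_eigenspace_diag (f : Cfg M → ℂ) (p : Cfg M) :
    e M p ∈ eigenspace (diag M f) (f p) :=
  mem_eigenspace_iff.2 (diag_e f p)

theorem diag_e_mem_eigenspace_diag (f g : Cfg M → ℂ) (p : Cfg M) :
    diag M g (e M p) ∈ eigenspace (diag M f) (f p) := by
  rw [diag_e]
  exact Submodule.smul_mem _ _ (e_mem_eigenspace_diag f p)

theorem comp_diag_eq_diag_comp {A : V M →ₗ[ℂ] V M} {f : Cfg M → ℂ}
    (hA : ∀ p, A (e M p) ∈ eigenspace (diag M f) (f p)) :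
    A ∘ₗ diag M f = diag M f ∘ₗ A :=
  linearMap_ext_e fun p => by
    rw [LinearMap.comp_apply, LinearMap.comp_apply, diag_e, map_smul, mem_eigenspace_iff.1 (hA p)]

theorem Hmu_eq_diag (μ : Fin M → ℝ) :
    Hmu M μ = diag M fun p => ∑ m : Fin M, if p.1 m = true then (μ m : ℂ) else 0 :=
  rfl

theorem sigz_eq_diag (m : Fin M) :
    sigz M m = diag M fun p => if p.2 m = true then (1 : ℂ) else -1 :=
  rfl

theorem HJop_e_mem_eigenspace_diag (J : Fin (M - 1) → ℝ) {f : Cfg M → ℂ}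
    (hforward : ∀ (p : Cfg M) (m : Fin (M - 1)), p.1 (sL M m) = true → p.1 (sR M m) = false →
      p.2 (sR M m) = false →
      f (hop M p.1 (sL M m) (sR M m), Function.update p.2 (sR M m) true) = f p)
    (hbackward : ∀ (p : Cfg M) (m : Fin (M - 1)), p.1 (sR M m) = true → p.1 (sL M m) = false →
      p.2 (sR M m) = true →
      f (hop M p.1 (sR M m) (sL M m), Function.update p.2 (sR M m) false) = f p)
    (p : Cfg M) : HJop M J (e M p) ∈ eigenspace (diag M f) (f p) := by
  rw [HJop, mkOp_e]
  refine Submodule.sum_mem _ fun m _ => Submodule.smul_mem _ _ (add_mem ?_ ?_)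
  · split_ifs with h
    · exact hforward p m h.1 h.2.1 h.2.2 ▸ e_mem_eigenspace_diag f _
    · exact zero_mem _
  · split_ifs with h
    · exact hbackward p m h.1 h.2.1 h.2.2 ▸ e_mem_eigenspace_diag f _
    · exact zero_mem _

end QuantumBreakdown

open QuantumBreakdown

section Charges

variable {M : ℕ}

theorem site1_zero (f : Fin M → Bool) : site1 M f 0 = 0 := by
  simp [site1]

theorem site1_of_lt {f : Fin M → Bool} {j : ℕ} (hj : M < j) : site1 M f j = 0 := by
  simp [site1, show ¬j ≤ M by omega]

theorem site1_succ (f : Fin M → Bool) (i : Fin M) : site1 M f (i + 1) = bC (f i) := by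
  simp [site1]

theorem site1_update (f : Fin M → Bool) (i : Fin M) (b : Bool) (j : ℕ) :
    site1 M (Function.update f i b) j
      = site1 M f j + if j = i + 1 then bC b - bC (f i) else 0 := by
  split_ifs with hj
  · subst hj
    rw [site1_succ, site1_succ, Function.update_self]
    ring
  · rw [add_zero]
    unfold site1
    split_ifs with h
    · rw [Function.update_of_ne]
      exact fun hi => hj (by have := Fin.val_eq_of_eq hi; simp at this; omega)
    · rfl

noncomputable def charge (k : ℕ) (p : Cfg M) : ℂ :=
  site1 M p.1 k + site1 M p.2 (k + 1) - site1 M p.2 k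

theorem Pop_eq_diag_charge (k : ℕ) : Pop M k = diag M (charge k) := by
  unfold Pop diag charge
  congr 2 with p
  split_ifs with h0 hM
  · simp [h0, site1_zero]
  · simp [hM, site1_of_lt (Nat.lt_succ_self M)]
  · rfl

theorem charge_eq_of_shift (k m : ℕ) (d : ℂ) {p q : Cfg M}
    (hn : ∀ j, site1 M q.1 j
      = site1 M p.1 j + (if j = m + 1 + 1 then d else 0) - if j = m + 1 then d else 0)
    (hs : ∀ j, site1 M q.2 j = site1 M p.2 j + if j = m + 1 + 1 then d else 0) :
    charge k q = charge k p := by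
  simp only [charge, hn, hs, Nat.add_right_cancel_iff]
  ring

theorem sL_ne_sR (m : Fin (M - 1)) : sL M m ≠ sR M m := by
  simp [sL, sR, Fin.ext_iff]

theorem charge_breakForward (k : ℕ) (p : Cfg M) (m : Fin (M - 1))
    (hnL : p.1 (sL M m) = true) (hnR : p.1 (sR M m) = false) (hsR : p.2 (sR M m) = false) :
    charge k (hop M p.1 (sL M m) (sR M m), Function.update p.2 (sR M m) true) = charge k p := by
  refine charge_eq_of_shift k m 1 (fun j => ?_) (fun j => ?_)
  · rw [hop, site1_update, site1_update, Function.update_of_ne (sL_ne_sR m).symm, hnL, hnR]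
    simp only [sL, sR, bC, Bool.false_eq_true, ↓reduceIte]
    split_ifs <;> ring
  · rw [site1_update, hsR]
    simp only [sR, bC, Bool.false_eq_true, ↓reduceIte]
    split_ifs <;> ring

theorem charge_breakBackward (k : ℕ) (p : Cfg M) (m : Fin (M - 1))
    (hnR : p.1 (sR M m) = true) (hnL : p.1 (sL M m) = false) (hsR : p.2 (sR M m) = true) :
    charge k (hop M p.1 (sR M m) (sL M m), Function.update p.2 (sR M m) false) = charge k p := by
  refine charge_eq_of_shift k m (-1) (fun j => ?_) (fun j => ?_)
  · rw [hop, site1_update, site1_update, Function.update_of_ne (sL_ne_sR m), hnL, hnR]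
    simp only [sL, sR, bC, Bool.false_eq_true, ↓reduceIte]
    split_ifs <;> ring
  · rw [site1_update, hsR]
    simp only [sR, bC, Bool.false_eq_true, ↓reduceIte]
    split_ifs <;> ring

end Charges

theorem local_charges_conserved_general (M : ℕ)
    (J : Fin (M - 1) → ℝ) (μ : Fin M → ℝ) (hz : Fin M → ℝ) :
    ∀ k ≤ M,
      (HJop M J + Hmu M μ + ∑ m : Fin M, (hz m : ℂ) • sigz M m) ∘ₗ Pop M k
        = Pop M k ∘ₗ (HJop M J + Hmu M μ + ∑ m : Fin M, (hz m : ℂ) • sigz M m) := by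
  intro k _
  rw [Pop_eq_diag_charge]
  refine comp_diag_eq_diag_comp fun p => ?_
  rw [LinearMap.add_apply, LinearMap.add_apply, LinearMap.sum_apply]
  refine add_mem (add_mem ?_ ?_) (Submodule.sum_mem _ fun m _ => ?_)
  · exact HJop_e_mem_eigenspace_diag J (charge_breakForward k) (charge_breakBackward k) p
  · exact Hmu_eq_diag μ ▸ diag_e_mem_eigenspace_diag _ _ p
  · rw [LinearMap.smul_apply, sigz_eq_diag]
    exact Submodule.smul_mem _ _ (diag_e_mem_eigenspace_diag _ _ p)

/-- every `P_k` (`0 ≤ k ≤ M`) commutes with the no-hopping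
breakdown Hamiltonian `H = H_J + H_μ + H_{h^z}`: the model possesses `M+1`
local conserved charges `P_0, …, P_M`. -/
theorem local_charges_conserved (M : ℕ) (hM : 2 ≤ M)
    (J : Fin (M - 1) → ℝ) (μ : Fin M → ℝ) (hz : Fin M → ℝ) :
    ∀ k ≤ M,
      (HJop M J + Hmu M μ + ∑ m : Fin M, (hz m : ℂ) • sigz M m) ∘ₗ Pop M k
        = Pop M k ∘ₗ (HJop M J + Hmu M μ + ∑ m : Fin M, (hz m : ℂ) • sigz M m) :=
  local_charges_conserved_general M J μ hz
end

section
/- (Doubly-rectangularized-state identities.) Let T = ĥ^{(R)}_{m−1} ĥ^{(L)}_m + ĥ^{(L)}_{m+1} ĥ^{(R)}_m. Then T D⁰ = D¹ and T D¹ = −4γ⁴ D⁰ + (4γ² + 2J²) D¹. Consequently T² D^r = (4γ² + 2J²) T D^r − 4γ⁴ D^r for r ∈ {0,1}. -/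
open scoped BigOperators

namespace QuantumBreakdown

/-- The right-hop term `ĥ^{(R)}_m` associated with edge `m` (moving a fermion
from site `m` to site `m+1`). -/
noncomputable def hRop (M : ℕ) (γ J : Fin (M - 1) → ℝ) (m : Fin (M - 1)) :
    V M →ₗ[ℂ] V M :=
  mkOp M fun p =>
    if p.1 (sL M m) = true ∧ p.1 (sR M m) = false then
      (-(γ m : ℂ)) • e M (hop M p.1 (sL M m) (sR M m), p.2)
        + (if p.2 (sR M m) = false then
            (J m : ℂ) • e M (hop M p.1 (sL M m) (sR M m), Function.update p.2 (sR M m) true)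
          else 0)
    else 0

/-- The left-hop term `ĥ^{(L)}_{m+1}` associated with edge `m` (moving a fermion
from site `m+1` to site `m`). -/
noncomputable def hLop (M : ℕ) (γ J : Fin (M - 1) → ℝ) (m : Fin (M - 1)) :
    V M →ₗ[ℂ] V M :=
  mkOp M fun p =>
    if p.1 (sR M m) = true ∧ p.1 (sL M m) = false then
      (-(γ m : ℂ)) • e M (hop M p.1 (sR M m) (sL M m), p.2)
        + (if p.2 (sR M m) = true then
            (J m : ℂ) • e M (hop M p.1 (sR M m) (sL M m), Function.update p.2 (sR M m) false)
          else 0)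
    else 0

end QuantumBreakdown


namespace QuantumBreakdown

lemma mkOp_apply_e (M : ℕ) (f : Cfg M → V M) (p : Cfg M) : mkOp M f (e M p) = f p := by
  have h : e M p = Pi.basisFun ℂ (Cfg M) p := by
    simp [e, Pi.basisFun_apply, Pi.single]
  rw [mkOp, h, Module.Basis.constr_basis]

lemma hRop_e (M : ℕ) (γ J : Fin (M - 1) → ℝ) (m : Fin (M - 1)) (p : Cfg M) :
    hRop M γ J m (e M p) =
      if p.1 (sL M m) = true ∧ p.1 (sR M m) = false then
        (-(γ m : ℂ)) • e M (hop M p.1 (sL M m) (sR M m), p.2)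
          + (if p.2 (sR M m) = false then
              (J m : ℂ) • e M (hop M p.1 (sL M m) (sR M m), Function.update p.2 (sR M m) true)
            else 0)
      else 0 := by
  rw [hRop, mkOp_apply_e]

lemma hLop_e (M : ℕ) (γ J : Fin (M - 1) → ℝ) (m : Fin (M - 1)) (p : Cfg M) :
    hLop M γ J m (e M p) =
      if p.1 (sR M m) = true ∧ p.1 (sL M m) = false then
        (-(γ m : ℂ)) • e M (hop M p.1 (sR M m) (sL M m), p.2)
          + (if p.2 (sR M m) = true then
              (J m : ℂ) • e M (hop M p.1 (sR M m) (sL M m), Function.update p.2 (sR M m) false)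
            else 0)
      else 0 := by
  rw [hLop, mkOp_apply_e]

lemma hop_hop (M : ℕ) (n : Fin M → Bool) (a b : Fin M) (hab : a ≠ b)
    (ha : n a = true) (hb : n b = false) : hop M (hop M n a b) b a = n := by
  funext x
  unfold hop
  rcases eq_or_ne x a with rfl | hxa
  · simp [Function.update_of_ne hab.symm, ha]
  · rcases eq_or_ne x b with rfl | hxb
    · simp [Function.update_of_ne hab, hb, Function.update_of_ne hxa]
    · simp [Function.update_of_ne hxa, Function.update_of_ne hxb]

lemma hop_at_b (M : ℕ) (n : Fin M → Bool) (a b : Fin M) : hop M n a b b = true := by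
  simp [hop]

lemma hop_at_a (M : ℕ) (n : Fin M → Bool) (a b : Fin M) (hab : a ≠ b) :
    hop M n a b a = false := by
  simp [hop, Function.update_of_ne hab]

lemma update_self_of_eq {α : Type*} {β : Type*} [DecidableEq α] (f : α → β) (a : α) (v : β)
    (h : f a = v) : Function.update f a v = f := by
  rw [← h]; exact Function.update_eq_self a f

lemma Tkey (M : ℕ) (γ J : ℝ) (fm fi fp : Fin M) (el er : Fin (M - 1))
    (hel : sL M el = fm) (her : sR M el = fi) (hel2 : sL M er = fi) (her2 : sR M er = fp)
    (hmi : fm ≠ fi) (hip : fi ≠ fp)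
    (n : Fin M → Bool) (hni : n fi = true) (hnm : n fm = false) (hnp : n fp = false)
    (σ : Fin M → Bool) (a b : Bool) (hσi : σ fi = a) (hσp : σ fp = b) :
    (hRop M (fun _ => γ) (fun _ => J) el ∘ₗ hLop M (fun _ => γ) (fun _ => J) el
      + hLop M (fun _ => γ) (fun _ => J) er ∘ₗ hRop M (fun _ => γ) (fun _ => J) er)
      (e M (n, σ))
    = (2 * (γ:ℂ)^2 + (if a then (J:ℂ)^2 else 0) + (if b then 0 else (J:ℂ)^2)) • e M (n, σ)
      - ((γ:ℂ) * J) • e M (n, Function.update σ fi (!a))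
      - ((γ:ℂ) * J) • e M (n, Function.update σ fp (!b)) := by
  have h1 : hop M (hop M n fi fm) fm fi = n := hop_hop M n fi fm hmi.symm hni hnm
  have h2 : hop M (hop M n fi fp) fp fi = n := hop_hop M n fi fp hip hni hnp
  have h3 : (hop M n fi fm) fm = true := hop_at_b ..
  have h4 : (hop M n fi fm) fi = false := hop_at_a _ _ _ _ hmi.symm
  have h5 : (hop M n fi fp) fp = true := hop_at_b ..
  have h6 : (hop M n fi fp) fi = false := hop_at_a _ _ _ _ hip
  simp only [LinearMap.add_apply, LinearMap.comp_apply]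
  cases a <;> cases b <;>
    simp only [hLop_e, hRop_e, hel, her, hel2, her2, hni, hnm, hnp, hσi, hσp, h1, h2, h3, h4,
      h5, h6, Function.update_self, Function.update_idem,
      update_self_of_eq σ fi _ hσi, update_self_of_eq σ fp _ hσp,
      Bool.true_eq_false, Bool.false_eq_true, Bool.not_true, Bool.not_false,
      and_self, and_true, true_and, and_false, false_and, if_true, if_false, ite_true, ite_false,
      map_add, map_smul, map_neg, map_zero, smul_add, smul_smul, smul_zero, add_zero, neg_neg,
      neg_mul, mul_neg] <;>
    (try rw [her2]) <;> (try rw [her]) <;>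
    (try simp only [Function.update_self, eq_self_iff_true, if_true, ite_true, smul_smul]) <;>
    module

end QuantumBreakdown

open QuantumBreakdown

set_option maxHeartbeats 2000000

/-- doubly-rectangularized-state identities. With uniform
couplings `γ, J`, a site `m = i+1` (`2 ≤ m ≤ M−1`) carrying the fermion, the
doubly neutral-rectangularized states `D⁰, D¹`, and
`T = ĥ^{(R)}_{m−1} ĥ^{(L)}_m + ĥ^{(L)}_{m+1} ĥ^{(R)}_m`:
`T D⁰ = D¹` and `T D¹ = −4γ⁴ D⁰ + (4γ²+2J²) D¹`; consequently
`T² D^r = (4γ²+2J²) T D^r − 4γ⁴ D^r` for `r ∈ {0,1}`. -/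
theorem doubly_rectangularized_state_identities (M : ℕ) (hM : 3 ≤ M) (γ J : ℝ)
    (i : ℕ) (h1 : 1 ≤ i) (h2 : i + 1 < M) (n s : Fin M → Bool)
    (hnm : n ⟨i, by omega⟩ = true) (hnl : n ⟨i - 1, by omega⟩ = false)
    (hnr : n ⟨i + 1, by omega⟩ = false) :
    let γf : Fin (M - 1) → ℝ := fun _ => γ
    let Jf : Fin (M - 1) → ℝ := fun _ => J
    let el : Fin (M - 1) := ⟨i - 1, by omega⟩  -- edge m−1
    let er : Fin (M - 1) := ⟨i, by omega⟩      -- edge m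
    let T : V M →ₗ[ℂ] V M :=
      hRop M γf Jf el ∘ₗ hLop M γf Jf el + hLop M γf Jf er ∘ₗ hRop M γf Jf er
    let eab : Bool → Bool → V M := fun a b =>
      e M (n, Function.update (Function.update s ⟨i, by omega⟩ a) ⟨i + 1, h2⟩ b)
    let D0 : V M := -((γ : ℂ) • eab false false) + (J : ℂ) • eab true false
      - (γ : ℂ) • eab true true
    let D1 : V M := -((2 * (γ : ℂ) * ((γ : ℂ) ^ 2 + (J : ℂ) ^ 2)) • eab false false)
      + (2 * (J : ℂ) * (γ : ℂ) ^ 2) • eab false true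
      + (2 * (J : ℂ) * (2 * (γ : ℂ) ^ 2 + (J : ℂ) ^ 2)) • eab true false
      - (2 * (γ : ℂ) * ((γ : ℂ) ^ 2 + (J : ℂ) ^ 2)) • eab true true
    (T D0 = D1) ∧
    (T D1 = -((4 * (γ : ℂ) ^ 4) • D0) + (4 * (γ : ℂ) ^ 2 + 2 * (J : ℂ) ^ 2) • D1) ∧
    (T (T D0) = (4 * (γ : ℂ) ^ 2 + 2 * (J : ℂ) ^ 2) • T D0 - (4 * (γ : ℂ) ^ 4) • D0) ∧
    (T (T D1) = (4 * (γ : ℂ) ^ 2 + 2 * (J : ℂ) ^ 2) • T D1 - (4 * (γ : ℂ) ^ 4) • D1) := by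
  intro γf Jf el er T eab D0 D1
  have hmi : (⟨i - 1, by omega⟩ : Fin M) ≠ ⟨i, by omega⟩ := by
    simp only [ne_eq, Fin.mk.injEq]; omega
  have hip : (⟨i, by omega⟩ : Fin M) ≠ ⟨i + 1, h2⟩ := by
    simp only [ne_eq, Fin.mk.injEq]; omega
  have her : sR M (⟨i - 1, by omega⟩ : Fin (M - 1)) = (⟨i, by omega⟩ : Fin M) := by
    simp only [sR, Fin.mk.injEq]; omega
  have hupd1 : ∀ a b c : Bool,
      Function.update (Function.update (Function.update s ⟨i, by omega⟩ a) ⟨i + 1, h2⟩ b)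
        ⟨i, by omega⟩ c
      = Function.update (Function.update s ⟨i, by omega⟩ c) ⟨i + 1, h2⟩ b := by
    intro a b c
    rw [Function.update_comm hip.symm, Function.update_idem, Function.update_comm hip]
  have key : ∀ a b : Bool, T (eab a b) =
      (2 * (γ:ℂ)^2 + (if a then (J:ℂ)^2 else 0) + (if b then 0 else (J:ℂ)^2)) • eab a b
        - ((γ:ℂ) * J) • eab (!a) b - ((γ:ℂ) * J) • eab a (!b) := by
    intro a b
    have hσi : (Function.update (Function.update s ⟨i, by omega⟩ a) ⟨i + 1, h2⟩ b)
        (⟨i, by omega⟩ : Fin M) = a := by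
      rw [Function.update_of_ne hip, Function.update_self]
    have hσp : (Function.update (Function.update s ⟨i, by omega⟩ a) ⟨i + 1, h2⟩ b)
        (⟨i + 1, h2⟩ : Fin M) = b := Function.update_self ..
    have base := Tkey M γ J ⟨i - 1, by omega⟩ ⟨i, by omega⟩ ⟨i + 1, h2⟩
      ⟨i - 1, by omega⟩ ⟨i, by omega⟩ rfl her rfl rfl hmi hip n hnm hnl hnr
      (Function.update (Function.update s ⟨i, by omega⟩ a) ⟨i + 1, h2⟩ b) a b hσi hσp
    rw [hupd1 a b (!a), Function.update_idem] at base
    exact base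
  have hTD0 : T D0 = D1 := by
    show T (-((γ:ℂ) • eab false false) + (J:ℂ) • eab true false - (γ:ℂ) • eab true true) = D1
    rw [map_sub, map_add, map_neg, map_smul, map_smul, map_smul, key, key, key]
    show _ = -((2 * (γ:ℂ) * ((γ:ℂ) ^ 2 + (J:ℂ) ^ 2)) • eab false false)
      + (2 * (J:ℂ) * (γ:ℂ) ^ 2) • eab false true
      + (2 * (J:ℂ) * (2 * (γ:ℂ) ^ 2 + (J:ℂ) ^ 2)) • eab true false
      - (2 * (γ:ℂ) * ((γ:ℂ) ^ 2 + (J:ℂ) ^ 2)) • eab true true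
    simp only [Bool.not_false, Bool.not_true, Bool.false_eq_true, Bool.true_eq_false,
      if_true, if_false, ite_true, ite_false]
    module
  have hTD1 : T D1 = -((4 * (γ:ℂ) ^ 4) • D0) + (4 * (γ:ℂ) ^ 2 + 2 * (J:ℂ) ^ 2) • D1 := by
    show T (-((2 * (γ:ℂ) * ((γ:ℂ) ^ 2 + (J:ℂ) ^ 2)) • eab false false)
      + (2 * (J:ℂ) * (γ:ℂ) ^ 2) • eab false true
      + (2 * (J:ℂ) * (2 * (γ:ℂ) ^ 2 + (J:ℂ) ^ 2)) • eab true false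
      - (2 * (γ:ℂ) * ((γ:ℂ) ^ 2 + (J:ℂ) ^ 2)) • eab true true) = _
    rw [map_sub, map_add, map_add, map_neg, map_smul, map_smul, map_smul, map_smul,
      key, key, key, key]
    show _ = -((4 * (γ:ℂ) ^ 4) • (-((γ:ℂ) • eab false false) + (J:ℂ) • eab true false
        - (γ:ℂ) • eab true true))
      + (4 * (γ:ℂ) ^ 2 + 2 * (J:ℂ) ^ 2) •
        (-((2 * (γ:ℂ) * ((γ:ℂ) ^ 2 + (J:ℂ) ^ 2)) • eab false false)
          + (2 * (J:ℂ) * (γ:ℂ) ^ 2) • eab false true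
          + (2 * (J:ℂ) * (2 * (γ:ℂ) ^ 2 + (J:ℂ) ^ 2)) • eab true false
          - (2 * (γ:ℂ) * ((γ:ℂ) ^ 2 + (J:ℂ) ^ 2)) • eab true true)
    simp only [Bool.not_false, Bool.not_true, Bool.false_eq_true, Bool.true_eq_false,
      if_true, if_false, ite_true, ite_false]
    module
  refine ⟨hTD0, hTD1, ?_, ?_⟩
  · rw [hTD0, hTD1]
    module
  · rw [hTD1, map_add, map_neg, map_smul, map_smul, hTD0, hTD1]
    module
end
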